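/- arXiv:1707.06304 — 6 statements merged into one kernel-verified Lean document; each statement's English description precedes it below -/
import Mathlib

section
/- Let Γ_{ij}^k be constant Christoffel symbols on ℝ² with Γ_{11}² = Γ_{12}² = 0, ρ₁₁ = ρ₁₂ = 0, and suppose (Γ₂₂²)² + 4μρ₂₂ = 0 with μ ≠ 0 and ρ₂₂ ≠ 0. Then with a = Γ₂₂²/2, the function f(x¹,x²) = x² exp(a x²) satisfies H(f)_{ij} = μ f ρ_{ij}. -/
open Real

/-- Partial derivative ∂_i on ℝ². -/
noncomputable def pd (i : Fin 2) (f : ℝ × ℝ → ℝ) : ℝ × ℝ → ℝ :=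
  fun p => if i = 0 then deriv (fun t => f (t, p.2)) p.1
           else deriv (fun t => f (p.1, t)) p.2

/-- Affine Hessian H(f)_{ij} = ∂_i∂_j f − Σ_k Γ_{ij}^k ∂_k f. -/
noncomputable def Hess (Γ : Fin 2 → Fin 2 → Fin 2 → (ℝ × ℝ → ℝ))
    (f : ℝ × ℝ → ℝ) (i j : Fin 2) : ℝ × ℝ → ℝ :=
  fun p => pd i (pd j f) p - ∑ k, Γ i j k p * pd k f p

/-- Ricci tensor ρ_{jk} = ∂_i Γ_{jk}^i − ∂_j Γ_{ik}^i + Γ_{il}^i Γ_{jk}^l − Γ_{jl}^i Γ_{ik}^l. -/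
noncomputable def Ric (Γ : Fin 2 → Fin 2 → Fin 2 → (ℝ × ℝ → ℝ)) (j k : Fin 2) :
    ℝ × ℝ → ℝ :=
  fun p => (∑ i, pd i (Γ j k i) p) - (∑ i, pd j (Γ i k i) p)
    + (∑ i, ∑ l, Γ i l i p * Γ j k l p) - (∑ i, ∑ l, Γ j l i p * Γ i k l p)

/-- Symmetrized Ricci tensor. -/
noncomputable def RicS (Γ : Fin 2 → Fin 2 → Fin 2 → (ℝ × ℝ → ℝ)) (i j : Fin 2) :
    ℝ × ℝ → ℝ :=
  fun p => (Ric Γ i j p + Ric Γ j i p) / 2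

/-- Covariant derivative of the Ricci tensor: (∇ρ)(i,j;k). -/
noncomputable def nabRic (Γ : Fin 2 → Fin 2 → Fin 2 → (ℝ × ℝ → ℝ)) (i j k : Fin 2) :
    ℝ × ℝ → ℝ :=
  fun p => pd k (Ric Γ i j) p - ∑ l, Γ k i l p * Ric Γ l j p
    - ∑ l, Γ k j l p * Ric Γ i l p

/-- Type B Christoffel symbols Γ_{ij}^k = C_{ij}^k / x¹. -/
noncomputable def ΓB (C : Fin 2 → Fin 2 → Fin 2 → ℝ) :
    Fin 2 → Fin 2 → Fin 2 → (ℝ × ℝ → ℝ) :=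
  fun i j k p => C i j k / p.1

/-!
The function `f = x² e^{a x²}` depends only on `x²` and the symbols are constant, so with
`Γ₁₁² = Γ₁₂² = 0` every entry of `H(f)` vanishes except `H₂₂ = f'' − Γ₂₂² f' = f'' − 2a f'`.
The discriminant condition reads `μ ρ₂₂ = −a²`, and `t e^{at}` solves `y'' − 2a y' + a² y = 0`
because `a` is a double root of its characteristic polynomial.
-/

lemma pd_comp_snd (i : Fin 2) (g : ℝ → ℝ) :
    pd i (fun p => g p.2) = fun p => (if i = 1 then deriv g else 0) p.2 := by
  funext p
  fin_cases i <;> simp [pd]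

lemma Hess_const_comp_snd (Γc : Fin 2 → Fin 2 → Fin 2 → ℝ) (g : ℝ → ℝ) (i j : Fin 2)
    (p : ℝ × ℝ) :
    Hess (fun i j k _ => Γc i j k) (fun p => g p.2) i j p
      = (if i = 1 ∧ j = 1 then deriv (deriv g) p.2 else 0) - Γc i j 1 * deriv g p.2 := by
  simp only [Hess, pd_comp_snd, Fin.sum_univ_two]
  fin_cases i <;> fin_cases j <;> simp

lemma deriv_mul_exp_mul (a : ℝ) :
    deriv (fun s => s * exp (a * s)) = fun t => exp (a * t) * (1 + a * t) := by
  funext t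
  refine ((hasDerivAt_id' t).mul ((hasDerivAt_id' t).const_mul a).exp).deriv.trans ?_
  ring

lemma deriv_deriv_mul_exp_mul (a : ℝ) :
    deriv (deriv (fun s => s * exp (a * s))) = fun t => exp (a * t) * (2 * a + a ^ 2 * t) := by
  rw [deriv_mul_exp_mul]
  funext t
  refine (((hasDerivAt_id' t).const_mul a).exp.mul
    (((hasDerivAt_id' t).const_mul a).const_add 1)).deriv.trans ?_
  ring

lemma mul_exp_mul_ode (a t : ℝ) :
    deriv (deriv (fun s => s * exp (a * s))) t - 2 * a * deriv (fun s => s * exp (a * s)) t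
      = -a ^ 2 * (t * exp (a * t)) := by
  rw [deriv_deriv_mul_exp_mul, deriv_mul_exp_mul]
  ring

theorem typeA_degenerate_solution_general
    (Γc : Fin 2 → Fin 2 → Fin 2 → ℝ)
    (hsym : ∀ i j k, Γc i j k = Γc j i k)
    (h1 : Γc 0 0 1 = 0) (h2 : Γc 0 1 1 = 0)
    (ρ22 μ : ℝ)
    (hdisc : (Γc 1 1 1) ^ 2 + 4 * μ * ρ22 = 0) :
    ∀ i j : Fin 2, ∀ p : ℝ × ℝ,
      Hess (fun i j k _ => Γc i j k)
          (fun p => p.2 * Real.exp ((Γc 1 1 1 / 2) * p.2)) i j p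
        = μ * (p.2 * Real.exp ((Γc 1 1 1 / 2) * p.2))
            * (if i = 1 ∧ j = 1 then ρ22 else 0) := by
  intro i j p
  rw [Hess_const_comp_snd Γc (fun s => s * exp (Γc 1 1 1 / 2 * s))]
  have h21 : Γc 1 0 1 = 0 := hsym 1 0 1 ▸ h2
  fin_cases i <;> fin_cases j
  · simp [h1]
  · simp [h2]
  · simp [h21]
  · have hode := mul_exp_mul_ode (Γc 1 1 1 / 2) p.2
    simp only [Fin.mk_one, and_self, if_true]
    linear_combination hode - p.2 * exp (Γc 1 1 1 / 2 * p.2) / 4 * hdisc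

/-- Type A, discriminant-zero case: f = x² exp(a x²) with a = Γ₂₂²/2 solves
H(f) = μ f ρ when (Γ₂₂²)² + 4 μ ρ₂₂ = 0. -/
theorem typeA_degenerate_solution
    (Γc : Fin 2 → Fin 2 → Fin 2 → ℝ)
    (hsym : ∀ i j k, Γc i j k = Γc j i k)
    (h1 : Γc 0 0 1 = 0) (h2 : Γc 0 1 1 = 0)
    (ρ22 μ : ℝ) (hμ : μ ≠ 0) (hρ : ρ22 ≠ 0)
    (hdisc : (Γc 1 1 1) ^ 2 + 4 * μ * ρ22 = 0) :
    ∀ i j : Fin 2, ∀ p : ℝ × ℝ,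
      Hess (fun i j k _ => Γc i j k)
          (fun p => p.2 * Real.exp ((Γc 1 1 1 / 2) * p.2)) i j p
        = μ * (p.2 * Real.exp ((Γc 1 1 1 / 2) * p.2))
            * (if i = 1 ∧ j = 1 then ρ22 else 0) :=
  typeA_degenerate_solution_general Γc hsym h1 h2 ρ22 μ hdisc
end

section
/- Let ∇ be a torsion-free connection on ℝ² with symmetric Ricci tensor ρ, let μ ≠ 0, and let f : ℝ² → ℝ be smooth and positive satisfying the quasi-Einstein equation H(f) = μ f ρ. Then the function f̂ := −(2/μ) log f satisfies H(f̂) + 2ρ − (μ/2) df̂ ⊗ df̂ = 0. -/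
open Real

lemma hasDerivAt_pd_fst (g : ℝ × ℝ → ℝ) (hg : Differentiable ℝ g) (p : ℝ × ℝ) :
    HasDerivAt (fun t => g (t, p.2)) (pd 0 g p) p.1 := by
  have hd : DifferentiableAt ℝ (fun t => g (t, p.2)) p.1 :=
    (hg (p.1, p.2)).comp p.1 (differentiableAt_id.prodMk (differentiableAt_const _))
  simpa [pd] using hd.hasDerivAt

lemma hasDerivAt_pd_snd (g : ℝ × ℝ → ℝ) (hg : Differentiable ℝ g) (p : ℝ × ℝ) :
    HasDerivAt (fun t => g (p.1, t)) (pd 1 g p) p.2 := by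
  have hd : DifferentiableAt ℝ (fun t => g (p.1, t)) p.2 :=
    (hg (p.1, p.2)).comp p.2 ((differentiableAt_const _).prodMk differentiableAt_id)
  simpa [pd] using hd.hasDerivAt

lemma pd_contDiff (g : ℝ × ℝ → ℝ) (hg : ContDiff ℝ (⊤ : ℕ∞) g) (i : Fin 2) :
    ContDiff ℝ (⊤ : ℕ∞) (pd i g) := by
  have hfd : ContDiff ℝ (⊤ : ℕ∞) fun p : ℝ × ℝ => fderiv ℝ g p :=
    hg.fderiv_right (by simp)
  fin_cases i
  · show ContDiff ℝ (⊤ : ℕ∞) (pd 0 g)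
    have heq : pd 0 g = fun p => fderiv ℝ g p (1, 0) := by
      funext p
      have h : HasDerivAt (fun t => g (t, p.2)) (fderiv ℝ g p ((1 : ℝ), (0 : ℝ))) p.1 :=
        ((hg.differentiable (by simp) (p.1, p.2)).hasFDerivAt).comp_hasDerivAt p.1
          ((hasDerivAt_id p.1).prodMk (hasDerivAt_const p.1 p.2))
      simpa [pd] using h.deriv
    rw [heq]
    exact hfd.clm_apply contDiff_const
  · show ContDiff ℝ (⊤ : ℕ∞) (pd 1 g)
    have heq : pd 1 g = fun p => fderiv ℝ g p (0, 1) := by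
      funext p
      have h : HasDerivAt (fun t => g (p.1, t)) (fderiv ℝ g p ((0 : ℝ), (1 : ℝ))) p.2 :=
        ((hg.differentiable (by simp) (p.1, p.2)).hasFDerivAt).comp_hasDerivAt p.2
          ((hasDerivAt_const p.2 p.1).prodMk (hasDerivAt_id p.2))
      simpa [pd] using h.deriv
    rw [heq]
    exact hfd.clm_apply contDiff_const

lemma pd_cmul_log (c : ℝ) (f : ℝ × ℝ → ℝ) (hf : Differentiable ℝ f)
    (hfpos : ∀ p, 0 < f p) (i : Fin 2) (p : ℝ × ℝ) :
    pd i (fun q => c * Real.log (f q)) p = c * pd i f p / f p := by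
  fin_cases i
  · show pd 0 (fun q => c * Real.log (f q)) p = c * pd 0 f p / f p
    have h : HasDerivAt (fun t => c * Real.log (f (t, p.2)))
        (c * ((f p)⁻¹ * pd 0 f p)) p.1 :=
      by have hl : HasDerivAt Real.log (f p)⁻¹ (f (p.1, p.2)) := Real.hasDerivAt_log (hfpos p).ne'
         exact ((hl.comp p.1 (hasDerivAt_pd_fst f hf p))).const_mul c
    have h0 : pd 0 (fun q => c * Real.log (f q)) p
        = deriv (fun t => c * Real.log (f (t, p.2))) p.1 := by simp [pd]
    rw [h0, h.deriv]; ring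
  · show pd 1 (fun q => c * Real.log (f q)) p = c * pd 1 f p / f p
    have h : HasDerivAt (fun t => c * Real.log (f (p.1, t)))
        (c * ((f p)⁻¹ * pd 1 f p)) p.2 :=
      by have hl : HasDerivAt Real.log (f p)⁻¹ (f (p.1, p.2)) := Real.hasDerivAt_log (hfpos p).ne'
         exact ((hl.comp p.2 (hasDerivAt_pd_snd f hf p))).const_mul c
    have h0 : pd 1 (fun q => c * Real.log (f q)) p
        = deriv (fun t => c * Real.log (f (p.1, t))) p.2 := by simp [pd]
    rw [h0, h.deriv]; ring

lemma pd_cmul_div (c : ℝ) (g f : ℝ × ℝ → ℝ) (hg : Differentiable ℝ g)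
    (hf : Differentiable ℝ f) (hfpos : ∀ p, 0 < f p) (i : Fin 2) (p : ℝ × ℝ) :
    pd i (fun q => c * g q / f q) p
      = (c * pd i g p * f p - c * g p * pd i f p) / (f p) ^ 2 := by
  fin_cases i
  · show pd 0 (fun q => c * g q / f q) p
        = (c * pd 0 g p * f p - c * g p * pd 0 f p) / (f p) ^ 2
    have h : HasDerivAt (fun t => c * g (t, p.2) / f (t, p.2))
        ((c * pd 0 g p * f p - c * g p * pd 0 f p) / (f p) ^ 2) p.1 :=
      ((hasDerivAt_pd_fst g hg p).const_mul c).div (hasDerivAt_pd_fst f hf p) (hfpos p).ne'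
    have h0 : pd 0 (fun q => c * g q / f q) p
        = deriv (fun t => c * g (t, p.2) / f (t, p.2)) p.1 := by simp [pd]
    rw [h0, h.deriv]
  · show pd 1 (fun q => c * g q / f q) p
        = (c * pd 1 g p * f p - c * g p * pd 1 f p) / (f p) ^ 2
    have h : HasDerivAt (fun t => c * g (p.1, t) / f (p.1, t))
        ((c * pd 1 g p * f p - c * g p * pd 1 f p) / (f p) ^ 2) p.2 :=
      ((hasDerivAt_pd_snd g hg p).const_mul c).div (hasDerivAt_pd_snd f hf p) (hfpos p).ne'
    have h0 : pd 1 (fun q => c * g q / f q) p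
        = deriv (fun t => c * g (p.1, t) / f (p.1, t)) p.2 := by simp [pd]
    rw [h0, h.deriv]

/-- The substitution f̂ = −(2/μ) log f converts the affine quasi-Einstein equation
into H(f̂) + 2ρ − (μ/2) df̂ ⊗ df̂ = 0. -/
theorem quasiEinstein_log_transform
    (Γ : Fin 2 → Fin 2 → Fin 2 → (ℝ × ℝ → ℝ))
    (hΓ : ∀ i j k, Γ i j k = Γ j i k)
    (ρ : Fin 2 → Fin 2 → (ℝ × ℝ → ℝ))
    (hρ : ∀ i j, ρ i j = ρ j i)
    (μ : ℝ) (hμ : μ ≠ 0)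
    (f : ℝ × ℝ → ℝ) (hf : ContDiff ℝ (⊤ : ℕ∞) f) (hfpos : ∀ p, 0 < f p)
    (hQE : ∀ i j : Fin 2, ∀ p : ℝ × ℝ, Hess Γ f i j p = μ * f p * ρ i j p) :
    ∀ i j : Fin 2, ∀ p : ℝ × ℝ,
      Hess Γ (fun q => -(2 / μ) * Real.log (f q)) i j p + 2 * ρ i j p
        - (μ / 2) * (pd i (fun q => -(2 / μ) * Real.log (f q)) p
            * pd j (fun q => -(2 / μ) * Real.log (f q)) p) = 0 := by
  intro i j p
  have hfd : Differentiable ℝ f := hf.differentiable (by simp)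
  have hF : f p ≠ 0 := (hfpos p).ne'
  have h1 : ∀ k : Fin 2, pd k (fun q => -(2 / μ) * Real.log (f q))
      = fun q => -(2 / μ) * pd k f q / f q :=
    fun k => funext fun q => pd_cmul_log _ f hfd hfpos k q
  have hpdj : Differentiable ℝ (pd j f) := (pd_contDiff f hf j).differentiable (by simp)
  have h2 : pd i (pd j (fun q => -(2 / μ) * Real.log (f q))) p
      = (-(2 / μ) * pd i (pd j f) p * f p - -(2 / μ) * pd j f p * pd i f p) / (f p) ^ 2 := by
    rw [h1 j]
    exact pd_cmul_div _ (pd j f) f hpdj hfd hfpos i p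
  have hsum : ∑ k, Γ i j k p * (-(2 / μ) * pd k f p / f p)
      = -(2 / μ) / f p * ∑ k, Γ i j k p * pd k f p := by
    rw [Finset.mul_sum]
    exact Finset.sum_congr rfl fun k _ => by ring
  have hA : pd i (pd j f) p = μ * f p * ρ i j p + ∑ k, Γ i j k p * pd k f p := by
    have h := hQE i j p
    simp only [Hess] at h
    linarith
  simp only [Hess]
  rw [h2]
  simp only [h1]
  rw [hsum, hA]
  field_simp
  ring
end

section
/- For the Type B connection on ℝ⁺ × ℝ with Christoffel symbols Γ_{ij}^k = (x¹)^{-1} C_{ij}^k for real constants C_{ij}^k = C_{ji}^k, the Ricci tensor ρ (defined by ρ_{jk} = ∂_i Γ_{jk}^i − ∂_j Γ_{ik}^i + Γ_{ip}^i Γ_{jk}^p − Γ_{jp}^i Γ_{ik}^p, summing over i,p) is symmetric if and only if C₂₂² = −C₁₂¹. -/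
open Real

/-!
Every Christoffel symbol is a constant multiple of `1/x¹`, whose only nonzero partial derivative
is `-1/(x¹)²`; so each term of `ρ_{jk}` is a constant multiple of `(x¹)⁻²`, and `ρ` is symmetric
iff its matrix of coefficients `ricB C` is. When `C` is symmetric, all terms of
`ρ₁₂ - ρ₂₁` cancel except those from `-∂_j Γ_{ik}^i`, which leave `(C₁₂¹ + C₂₂²)/(x¹)²`.
-/

theorem forall_fin_two_eq_swap_iff {α : Type*} (f : Fin 2 → Fin 2 → α) :
    (∀ j k, f j k = f k j) ↔ f 0 1 = f 1 0 := by
  refine ⟨fun h => h 0 1, fun h j k => ?_⟩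
  fin_cases j <;> fin_cases k
  exacts [rfl, h, h.symm, rfl]

/-- At `p.1 = 0` both sides vanish, by the conventions `0⁻¹ = 0` and `deriv` of a
non-differentiable function `= 0`. -/
theorem pd_ΓB (C : Fin 2 → Fin 2 → Fin 2 → ℝ) (l i j k : Fin 2) (p : ℝ × ℝ) :
    pd l (ΓB C i j k) p = if l = 0 then -C i j k / p.1 ^ 2 else 0 := by
  unfold pd ΓB
  split_ifs
  · simp [div_eq_mul_inv]
  · simp

def ricB (C : Fin 2 → Fin 2 → Fin 2 → ℝ) (j k : Fin 2) : ℝ :=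
  -C j k 0 + (if j = 0 then ∑ i, C i k i else 0)
    + ∑ i, ∑ l, C i l i * C j k l - ∑ i, ∑ l, C j l i * C i k l

theorem Ric_ΓB (C : Fin 2 → Fin 2 → Fin 2 → ℝ) (j k : Fin 2) {p : ℝ × ℝ} (hp : p.1 ≠ 0) :
    Ric (ΓB C) j k p = ricB C j k / p.1 ^ 2 := by
  simp only [Ric, ricB, pd_ΓB, ΓB, Fin.sum_univ_two, Fin.isValue, ↓reduceIte, one_ne_zero]
  split_ifs <;> field_simp <;> ring

theorem Ric_ΓB_eq_swap_iff (C : Fin 2 → Fin 2 → Fin 2 → ℝ) (j k : Fin 2) {p : ℝ × ℝ}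
    (hp : p.1 ≠ 0) : Ric (ΓB C) j k p = Ric (ΓB C) k j p ↔ ricB C j k = ricB C k j := by
  rw [Ric_ΓB C j k hp, Ric_ΓB C k j hp, div_left_inj' (pow_ne_zero 2 hp)]

theorem ricB_sub_swap (C : Fin 2 → Fin 2 → Fin 2 → ℝ) (hsym : ∀ i j k, C i j k = C j i k) :
    ricB C 0 1 - ricB C 1 0 = C 1 1 1 + C 0 1 0 := by
  simp only [ricB, Fin.sum_univ_two, hsym 1 0, if_pos, if_neg one_ne_zero]
  ring

/-- For a Type B connection, the Ricci tensor is symmetric iff C₂₂² = −C₁₂¹. -/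
theorem typeB_ricci_symmetric_iff
    (C : Fin 2 → Fin 2 → Fin 2 → ℝ)
    (hsym : ∀ i j k, C i j k = C j i k) :
    (∀ j k : Fin 2, ∀ p : ℝ × ℝ, 0 < p.1 →
        Ric (ΓB C) j k p = Ric (ΓB C) k j p)
      ↔ C 1 1 1 = - C 0 1 0 := by
  have hconst : ∀ j k : Fin 2, (∀ p : ℝ × ℝ, 0 < p.1 → Ric (ΓB C) j k p = Ric (ΓB C) k j p)
      ↔ ricB C j k = ricB C k j := fun j k =>
    ⟨fun h => (Ric_ΓB_eq_swap_iff C j k (p := (1, 0)) one_ne_zero).1 (h (1, 0) one_pos),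
      fun h p hp => (Ric_ΓB_eq_swap_iff C j k hp.ne').2 h⟩
  simp_rw [hconst]
  rw [forall_fin_two_eq_swap_iff (ricB C), ← sub_eq_zero, ricB_sub_swap C hsym,
    add_eq_zero_iff_eq_neg]
end

section
/- Let ∇ be a Type B connection on ℝ⁺ × ℝ with C₁₁¹ = α − 1, C₁₂¹ = 0, C₂₂¹ = 0 for some real α ≠ 0. Then f(x¹,x²) = (x¹)^α satisfies the Yamabe soliton equation H(f) = 0. -/
open Real

/-! For a function of `x¹` alone only `∂₁` survives, so the Hessian of a Type B connection is
`H(f)₁₁ = f'' − C₁₁¹ f' / x¹` and `H(f)ᵢⱼ = −Cᵢⱼ¹ f' / x¹` otherwise. For `f = (x¹)^α` the first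
is `α(α−1)(x¹)^(α−2) − (α−1)·α(x¹)^(α−2) = 0`, and the others vanish because
`C₁₂¹ = C₂₁¹ = C₂₂¹ = 0`. -/

theorem pd_comp_fst (k : Fin 2) (g : ℝ → ℝ) :
    pd k (fun q => g q.1) = fun q => if k = 0 then deriv g q.1 else 0 := by
  funext q
  by_cases hk : k = 0 <;> simp [pd, hk]

theorem pd_const (k : Fin 2) (c : ℝ) : pd k (fun _ => c) = 0 := by
  funext q
  by_cases hk : k = 0 <;> simp [pd, hk]

theorem hess_comp_fst (Γ : Fin 2 → Fin 2 → Fin 2 → (ℝ × ℝ → ℝ)) (g : ℝ → ℝ)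
    (i j : Fin 2) (p : ℝ × ℝ) :
    Hess Γ (fun q => g q.1) i j p =
      (if i = 0 ∧ j = 0 then deriv (deriv g) p.1 else 0) - Γ i j 0 p * deriv g p.1 := by
  fin_cases i <;> fin_cases j <;> simp [Hess, pd_comp_fst, pd_const]

theorem typeB_rpow_yamabe_soliton_general
    (C : Fin 2 → Fin 2 → Fin 2 → ℝ)
    (hsym : ∀ i j k, C i j k = C j i k)
    (α : ℝ)
    (h1 : C 0 0 0 = α - 1) (h2 : C 0 1 0 = 0) (h3 : C 1 1 0 = 0) :
    ∀ i j : Fin 2, ∀ p : ℝ × ℝ, 0 < p.1 →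
      Hess (ΓB C) (fun q => q.1 ^ α) i j p = 0 := by
  intro i j p hp
  rw [hess_comp_fst _ (fun t => t ^ α), deriv_rpow_const', deriv_const_mul_field',
    deriv_rpow_const']
  fin_cases i <;> fin_cases j
  · have hpow : p.1 ^ (α - 1) = p.1 ^ (α - 1 - 1) * p.1 := by
      rw [← rpow_add_one hp.ne', sub_add_cancel]
    simp only [Fin.zero_eta, and_self, ↓reduceIte, ΓB, h1, hpow]
    field_simp
    ring
  all_goals simp [ΓB, h2, hsym 1 0 0 ▸ h2, h3]

/-- Type B with C₁₁¹ = α − 1, C₁₂¹ = C₂₂¹ = 0 and α ≠ 0: f = (x¹)^α is a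
Yamabe soliton. -/
theorem typeB_rpow_yamabe_soliton
    (C : Fin 2 → Fin 2 → Fin 2 → ℝ)
    (hsym : ∀ i j k, C i j k = C j i k)
    (α : ℝ) (hα : α ≠ 0)
    (h1 : C 0 0 0 = α - 1) (h2 : C 0 1 0 = 0) (h3 : C 1 1 0 = 0) :
    ∀ i j : Fin 2, ∀ p : ℝ × ℝ, 0 < p.1 →
      Hess (ΓB C) (fun q => q.1 ^ α) i j p = 0 :=
  typeB_rpow_yamabe_soliton_general C hsym α h1 h2 h3
end

section
/- Let (M,∇) be an affine surface whose Ricci tensor ρ is symmetric and whose covariant derivative ∇ρ is totally symmetric (i.e. ∇ is strongly projectively flat). If f satisfies the quasi-Einstein equation H(f) = μ f ρ, then for each i, (μ+1)·(ρ_{2i}∂₁f − ρ_{1i}∂₂f) = 0. -/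
open Real

section Aux

/-- Coordinate basis vectors of ℝ². -/
noncomputable def ee : Fin 2 → ℝ × ℝ := fun i => if i = 0 then (1, 0) else (0, 1)

lemma pd_eq_fderiv {g : ℝ × ℝ → ℝ} {p : ℝ × ℝ} (hg : DifferentiableAt ℝ g p) (i : Fin 2) :
    pd i g p = fderiv ℝ g p (ee i) := by
  have hg' : DifferentiableAt ℝ g (p.1, p.2) := by simpa using hg
  fin_cases i
  · have h0 : HasDerivAt (fun t : ℝ => (t, p.2)) ((1:ℝ), (0:ℝ)) p.1 :=
      (hasDerivAt_id _).prodMk (hasDerivAt_const _ _)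
    have := (hg'.hasFDerivAt.comp_hasDerivAt p.1 h0)
    simpa [pd, ee, Function.comp_def] using this.deriv
  · have h1 : HasDerivAt (fun t : ℝ => (p.1, t)) ((0:ℝ), (1:ℝ)) p.2 :=
      (hasDerivAt_const _ _).prodMk (hasDerivAt_id _)
    have := (hg'.hasFDerivAt.comp_hasDerivAt p.2 h1)
    simpa [pd, ee, Function.comp_def] using this.deriv

lemma pd_congr {g h : ℝ × ℝ → ℝ} {p : ℝ × ℝ} (hgh : g =ᶠ[nhds p] h) (i : Fin 2) :
    pd i g p = pd i h p := by
  fin_cases i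
  · have t : Filter.Tendsto (fun t : ℝ => (t, p.2)) (nhds p.1) (nhds p) := by
      have := (continuous_id.prodMk (continuous_const (y := p.2))).tendsto p.1
      simpa using this
    have : (fun t : ℝ => g (t, p.2)) =ᶠ[nhds p.1] fun t => h (t, p.2) := hgh.comp_tendsto t
    simp only [pd]
    simp [this.deriv_eq]
  · have t : Filter.Tendsto (fun t : ℝ => (p.1, t)) (nhds p.2) (nhds p) := by
      have := ((continuous_const (y := p.1)).prodMk continuous_id).tendsto p.2
      simpa using this
    have : (fun t : ℝ => g (p.1, t)) =ᶠ[nhds p.2] fun t => h (p.1, t) := hgh.comp_tendsto t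
    simp only [pd]
    simp [this.deriv_eq]

variable {M : Set (ℝ × ℝ)}

lemma diffAt {F : Type*} [NormedAddCommGroup F] [NormedSpace ℝ F]
    (hM : IsOpen M) {g : ℝ × ℝ → F} (hg : ContDiffOn ℝ (⊤ : ℕ∞) g M) {p : ℝ × ℝ}
    (hp : p ∈ M) : DifferentiableAt ℝ g p :=
  (hg.contDiffAt (hM.mem_nhds hp)).differentiableAt (by simp)

lemma pd_eqOn (hM : IsOpen M) {g : ℝ × ℝ → ℝ} (hg : ContDiffOn ℝ (⊤ : ℕ∞) g M) (i : Fin 2) :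
    Set.EqOn (pd i g) (fun q => fderiv ℝ g q (ee i)) M :=
  fun _ hq => pd_eq_fderiv (diffAt hM hg hq) i

lemma pd_contDiffOn (hM : IsOpen M) {g : ℝ × ℝ → ℝ} (hg : ContDiffOn ℝ (⊤ : ℕ∞) g M) (i : Fin 2) :
    ContDiffOn ℝ (⊤ : ℕ∞) (pd i g) M := by
  have h1 : ContDiffOn ℝ (⊤ : ℕ∞) (fun q => fderiv ℝ g q (ee i)) M :=
    (hg.fderiv_of_isOpen hM (by exact_mod_cast le_top)).clm_apply contDiffOn_const
  exact h1.congr (pd_eqOn hM hg i)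

lemma pd_mul {g h : ℝ × ℝ → ℝ} {p : ℝ × ℝ} (hg : DifferentiableAt ℝ g p)
    (hh : DifferentiableAt ℝ h p) (i : Fin 2) :
    pd i (fun q => g q * h q) p = pd i g p * h p + g p * pd i h p := by
  rw [pd_eq_fderiv (g := fun q => g q * h q) (hg.mul hh), pd_eq_fderiv hg i, pd_eq_fderiv hh i, fderiv_fun_mul hg hh]
  simp
  ring

lemma pd_sub {g h : ℝ × ℝ → ℝ} {p : ℝ × ℝ} (hg : DifferentiableAt ℝ g p)
    (hh : DifferentiableAt ℝ h p) (i : Fin 2) :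
    pd i (fun q => g q - h q) p = pd i g p - pd i h p := by
  rw [pd_eq_fderiv (g := fun q => g q - h q) (hg.sub hh), pd_eq_fderiv hg i, pd_eq_fderiv hh i, fderiv_fun_sub hg hh]
  simp

lemma pd_add {g h : ℝ × ℝ → ℝ} {p : ℝ × ℝ} (hg : DifferentiableAt ℝ g p)
    (hh : DifferentiableAt ℝ h p) (i : Fin 2) :
    pd i (fun q => g q + h q) p = pd i g p + pd i h p := by
  rw [pd_eq_fderiv (g := fun q => g q + h q) (hg.add hh), pd_eq_fderiv hg i, pd_eq_fderiv hh i, fderiv_fun_add hg hh]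
  simp

lemma pd_const_mul {g : ℝ × ℝ → ℝ} {p : ℝ × ℝ} (c : ℝ) (hg : DifferentiableAt ℝ g p)
    (i : Fin 2) :
    pd i (fun q => c * g q) p = c * pd i g p := by
  rw [pd_eq_fderiv (hg.const_mul c), pd_eq_fderiv hg i, fderiv_const_mul hg c]
  simp

lemma pd_comm (hM : IsOpen M) {g : ℝ × ℝ → ℝ} (hg : ContDiffOn ℝ (⊤ : ℕ∞) g M) {p : ℝ × ℝ}
    (hp : p ∈ M) (a b : Fin 2) :
    pd a (pd b g) p = pd b (pd a g) p := by
  have hdf : DifferentiableAt ℝ (fderiv ℝ g) p :=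
    diffAt hM (hg.fderiv_of_isOpen hM (by exact_mod_cast le_top)) hp
  have key : ∀ a b : Fin 2, pd a (pd b g) p = fderiv ℝ (fderiv ℝ g) p (ee a) (ee b) := by
    intro a b
    have h1 : pd a (pd b g) p = pd a (fun q => fderiv ℝ g q (ee b)) p :=
      pd_congr (Filter.eventuallyEq_of_mem (hM.mem_nhds hp) (pd_eqOn hM hg b)) a
    rw [h1, pd_eq_fderiv (hdf.clm_apply (differentiableAt_const _)) a,
      fderiv_clm_apply hdf (differentiableAt_const _)]
    simp
  have hsym : IsSymmSndFDerivAt ℝ g p :=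
    (hg.contDiffAt (hM.mem_nhds hp)).isSymmSndFDerivAt (by rw [minSmoothness_of_isRCLikeNormedField]; exact WithTop.coe_le_coe.mpr le_top)
  rw [key a b, key b a, hsym (ee a) (ee b)]

end Aux

/-- On a strongly projectively flat affine surface (ρ symmetric, ∇ρ totally
symmetric), a solution of H(f) = μ f ρ satisfies
(μ+1)(ρ_{2i}∂₁f − ρ_{1i}∂₂f) = 0. -/
theorem stronglyProjFlat_key_identity
    (M : Set (ℝ × ℝ)) (hM : IsOpen M)
    (Γ : Fin 2 → Fin 2 → Fin 2 → (ℝ × ℝ → ℝ))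
    (hΓ : ∀ i j k, Γ i j k = Γ j i k)
    (hΓsm : ∀ i j k, ContDiffOn ℝ (⊤ : ℕ∞) (Γ i j k) M)
    (hρsym : ∀ i j : Fin 2, ∀ p ∈ M, Ric Γ i j p = Ric Γ j i p)
    (htot : ∀ i j k : Fin 2, ∀ p ∈ M,
      nabRic Γ i j k p = nabRic Γ j i k p ∧
      nabRic Γ i j k p = nabRic Γ i k j p)
    (μ : ℝ) (f : ℝ × ℝ → ℝ) (hf : ContDiffOn ℝ (⊤ : ℕ∞) f M)
    (hQE : ∀ i j : Fin 2, ∀ p ∈ M, Hess Γ f i j p = μ * f p * Ric Γ i j p) :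
    ∀ i : Fin 2, ∀ p ∈ M,
      (μ + 1) * (Ric Γ 1 i p * pd 0 f p - Ric Γ 0 i p * pd 1 f p) = 0 := by
  intro i p hp
  have hpdf : ∀ j : Fin 2, ContDiffOn ℝ (⊤ : ℕ∞) (pd j f) M := fun j => pd_contDiffOn hM hf j
  have hpdΓ : ∀ (c a b k : Fin 2), ContDiffOn ℝ (⊤ : ℕ∞) (pd c (Γ a b k)) M :=
    fun c a b k => pd_contDiffOn hM (hΓsm a b k) c
  -- Ricci tensor is smooth on M
  have hRicSm : ∀ a b : Fin 2, ContDiffOn ℝ (⊤ : ℕ∞) (Ric Γ a b) M := by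
    intro a b
    unfold Ric
    refine ContDiffOn.sub (ContDiffOn.add (ContDiffOn.sub ?_ ?_) ?_) ?_
    · exact ContDiffOn.sum fun c _ => hpdΓ c a b c
    · exact ContDiffOn.sum fun c _ => hpdΓ a c b c
    · exact ContDiffOn.sum fun c _ =>
        ContDiffOn.sum fun l _ => (hΓsm c l c).mul (hΓsm a b l)
    · exact ContDiffOn.sum fun c _ =>
        ContDiffOn.sum fun l _ => (hΓsm a l c).mul (hΓsm c b l)
  -- the Hessian as an explicit function
  have hHessfun : ∀ a b : Fin 2, Hess Γ f a b = fun q =>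
      pd a (pd b f) q - (Γ a b 0 q * pd 0 f q + Γ a b 1 q * pd 1 f q) := by
    intro a b; funext q; simp [Hess, Fin.sum_univ_two]
  -- expansion of pd c (Hess Γ f a b) p
  have hexp : ∀ a b c : Fin 2, pd c (Hess Γ f a b) p =
      pd c (pd a (pd b f)) p -
        (pd c (Γ a b 0) p * pd 0 f p + Γ a b 0 p * pd c (pd 0 f) p +
          (pd c (Γ a b 1) p * pd 1 f p + Γ a b 1 p * pd c (pd 1 f) p)) := by
    intro a b c
    have d1 : DifferentiableAt ℝ (pd a (pd b f)) p :=
      diffAt hM (pd_contDiffOn hM (hpdf b) a) hp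
    have dΓ : ∀ k, DifferentiableAt ℝ (Γ a b k) p := fun k => diffAt hM (hΓsm a b k) hp
    have dpf : ∀ k : Fin 2, DifferentiableAt ℝ (pd k f) p := fun k => diffAt hM (hpdf k) hp
    have s0 : DifferentiableAt ℝ (fun q => Γ a b 0 q * pd 0 f q) p := (dΓ 0).mul (dpf 0)
    have s1 : DifferentiableAt ℝ (fun q => Γ a b 1 q * pd 1 f q) p := (dΓ 1).mul (dpf 1)
    have e0 : pd c (fun q => pd a (pd b f) q -
        (Γ a b 0 q * pd 0 f q + Γ a b 1 q * pd 1 f q)) p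
        = pd c (pd a (pd b f)) p -
          pd c (fun q => Γ a b 0 q * pd 0 f q + Γ a b 1 q * pd 1 f q) p :=
      pd_sub d1 (s0.add s1) c
    have e1 : pd c (fun q => Γ a b 0 q * pd 0 f q + Γ a b 1 q * pd 1 f q) p
        = pd c (fun q => Γ a b 0 q * pd 0 f q) p + pd c (fun q => Γ a b 1 q * pd 1 f q) p :=
      pd_add s0 s1 c
    have e2 : pd c (fun q => Γ a b 0 q * pd 0 f q) p
        = pd c (Γ a b 0) p * pd 0 f p + Γ a b 0 p * pd c (pd 0 f) p :=
      pd_mul (dΓ 0) (dpf 0) c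
    have e3 : pd c (fun q => Γ a b 1 q * pd 1 f q) p
        = pd c (Γ a b 1) p * pd 1 f p + Γ a b 1 p * pd c (pd 1 f) p :=
      pd_mul (dΓ 1) (dpf 1) c
    rw [hHessfun a b, e0, e1, e2, e3]
  -- derivative of the quasi-Einstein equation
  have hQEfun : ∀ a b : Fin 2, Hess Γ f a b =ᶠ[nhds p] fun q => μ * f q * Ric Γ a b q :=
    fun a b => Filter.eventuallyEq_of_mem (hM.mem_nhds hp) (fun q hq => hQE a b q hq)
  have hrhs : ∀ a b c : Fin 2, pd c (Hess Γ f a b) p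
      = μ * (pd c f p * Ric Γ a b p + f p * pd c (Ric Γ a b) p) := by
    intro a b c
    have df : DifferentiableAt ℝ f p := diffAt hM hf hp
    have dR : DifferentiableAt ℝ (Ric Γ a b) p := diffAt hM (hRicSm a b) hp
    have e0 : pd c (Hess Γ f a b) p = pd c (fun q => μ * (f q * Ric Γ a b q)) p := by
      refine pd_congr (.trans (hQEfun a b) ?_) c
      filter_upwards with q using by ring
    have e1 : pd c (fun q => μ * (f q * Ric Γ a b q)) p
        = μ * pd c (fun q => f q * Ric Γ a b q) p := pd_const_mul μ (df.mul dR) c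
    have e2 : pd c (fun q => f q * Ric Γ a b q) p
        = pd c f p * Ric Γ a b p + f p * pd c (Ric Γ a b) p := pd_mul df dR c
    rw [e0, e1, e2]
  have h1 : pd 0 (Hess Γ f i 1) p
      = μ * (pd 0 f p * Ric Γ i 1 p + f p * pd 0 (Ric Γ i 1) p) := hrhs i 1 0
  have h2 : pd 1 (Hess Γ f i 0) p
      = μ * (pd 1 f p * Ric Γ i 0 p + f p * pd 1 (Ric Γ i 0) p) := hrhs i 0 1
  have h3 := hexp i 1 0
  have h4 := hexp i 0 1
  -- Schwarz symmetry
  have s1 : pd 1 (pd 0 f) p = pd 0 (pd 1 f) p := pd_comm hM hf hp 1 0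
  have t3 : pd 1 (pd i (pd 0 f)) p = pd 0 (pd i (pd 1 f)) p := by
    have e1 : pd 1 (pd i (pd 0 f)) p = pd i (pd 1 (pd 0 f)) p := pd_comm hM (hpdf 0) hp 1 i
    have e2 : pd i (pd 1 (pd 0 f)) p = pd i (pd 0 (pd 1 f)) p :=
      pd_congr (Filter.eventuallyEq_of_mem (hM.mem_nhds hp)
        (fun q hq => pd_comm hM hf hq 1 0)) i
    have e3 : pd i (pd 0 (pd 1 f)) p = pd 0 (pd i (pd 1 f)) p := pd_comm hM (hpdf 1) hp i 0
    rw [e1, e2, e3]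
  -- pointwise quasi-Einstein equations
  have h500 := hQE 0 0 p hp
  have h501 := hQE 0 1 p hp
  have h510 := hQE 1 0 p hp
  have h511 := hQE 1 1 p hp
  simp only [Hess, Fin.sum_univ_two] at h500 h501 h510 h511
  -- total symmetry of ∇ρ
  have h7 := (htot i 1 0 p hp).2
  simp only [nabRic, Fin.sum_univ_two] at h7
  -- symmetry of ρ
  have h8a := hρsym 1 i p hp
  have h8b := hρsym 0 i p hp
  -- abstract the derivatives of the Ricci tensor
  generalize hX : pd 0 (Ric Γ i 1) p = X at h1 h7
  generalize hY : pd 1 (Ric Γ i 0) p = Y at h2 h7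
  -- expand all remaining Ricci values
  simp only [Ric, Fin.sum_univ_two] at h1 h2 h500 h501 h510 h511 h7 h8a h8b ⊢
  -- normalize Christoffel indices
  simp only [hΓ 1 i, hΓ 0 i, hΓ 1 0] at *
  -- normalize second and third derivatives
  rw [t3] at h4
  simp only [s1] at *
  linear_combination h3 - h4 - h1 + h2 - μ * f p * h7
    + Γ i 0 0 p * h501 + Γ i 0 1 p * h511 - Γ i 1 0 p * h500 - Γ i 1 1 p * h510
    + μ * pd 0 f p * h8a - μ * pd 1 f p * h8b
end

section
/- Let ∇ be a Type B connection with C₁₁¹ = C₁₂² − 1, C₁₁² = 0, C₁₂¹ = 0, C₂₂¹ = ε = ±1, C₂₂² = 0 and μ = C₁₂²/2 ≠ 0. Then the two functions f₁(x¹,x²) = (x¹)^α and f₂(x¹,x²) = (x¹)^α x², where α = μ(1 + C₁₂² − C₁₁¹) = C₁₂², both satisfy the quasi-Einstein equation H(f) = μ f ρ_s, so dim E(μ,∇) ≥ 2. -/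
open Real

/-!
Under the hypotheses the coefficients are determined by α = C₁₂² and ε, and the Ricci tensor
is ρ = −2ε (x¹)⁻² dx² ⊗ dx². The affine Hessian of f = (x¹)^α h(x²) vanishes except for
H₂₂ = (x¹)^α (h'' − αε h / (x¹)²), which equals (α/2) f ρ₂₂ exactly when h'' = 0; this covers
both h = 1 and h = x².
-/

namespace TypeB

lemma pd_zero_fst (u : ℝ → ℝ) : pd 0 (fun q : ℝ × ℝ => u q.1) = fun q => deriv u q.1 := by
  funext q; simp [pd]

lemma pd_one_fst (u : ℝ → ℝ) : pd 1 (fun q : ℝ × ℝ => u q.1) = 0 := by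
  funext q; simp [pd]

lemma pd_zero_mul (u v : ℝ → ℝ) :
    pd 0 (fun q : ℝ × ℝ => u q.1 * v q.2) = fun q => deriv u q.1 * v q.2 := by
  funext q; simp [pd, deriv_mul_const_field]

lemma pd_one_mul (u v : ℝ → ℝ) :
    pd 1 (fun q : ℝ × ℝ => u q.1 * v q.2) = fun q => u q.1 * deriv v q.2 := by
  funext q; simp [pd, deriv_const_mul_field]

lemma pd_ΓB (C : Fin 2 → Fin 2 → Fin 2 → ℝ) (i j k l : Fin 2) (p : ℝ × ℝ) :
    pd l (ΓB C i j k) p = if l = 0 then -C i j k / p.1 ^ 2 else 0 := by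
  rw [show ΓB C i j k = fun q : ℝ × ℝ => (C i j k / ·) q.1 from rfl]
  fin_cases l <;> simp only [Fin.zero_eta, Fin.mk_one]
  · rw [pd_zero_fst]; simp [div_eq_mul_inv]
  · rw [pd_one_fst]; simp

def ricCoeff (C : Fin 2 → Fin 2 → Fin 2 → ℝ) (j k : Fin 2) : ℝ :=
  -C j k 0 + (if j = 0 then ∑ i, C i k i else 0)
    + ∑ i, ∑ l, (C i l i * C j k l - C j l i * C i k l)

lemma Ric_ΓB (C : Fin 2 → Fin 2 → Fin 2 → ℝ) (j k : Fin 2) (p : ℝ × ℝ) :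
    Ric (ΓB C) j k p = ricCoeff C j k / p.1 ^ 2 := by
  simp only [Ric, ricCoeff, pd_ΓB, Fin.sum_univ_two]
  fin_cases j <;> simp only [ΓB, Fin.zero_eta, Fin.mk_one, Fin.isValue, one_ne_zero, ↓reduceIte] <;>
    ring

/-- Indices `0, 1` stand for the paper's `1, 2`; `a` is `C₁₂²`. -/
def familyC (a ε : ℝ) : Fin 2 → Fin 2 → Fin 2 → ℝ :=
  ![![![a - 1, 0], ![0, a]], ![![0, a], ![ε, 0]]]

lemma eq_familyC {C : Fin 2 → Fin 2 → Fin 2 → ℝ} {ε : ℝ} (hsym : ∀ i j k, C i j k = C j i k)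
    (h1 : C 0 0 0 = C 0 1 1 - 1) (h2 : C 0 0 1 = 0) (h3 : C 0 1 0 = 0)
    (h4 : C 1 1 0 = ε) (h5 : C 1 1 1 = 0) :
    C = familyC (C 0 1 1) ε := by
  ext i j k
  fin_cases i <;> fin_cases j <;> fin_cases k <;>
    simp [familyC, h1, h2, h3, h4, h5, hsym 1 0 0, hsym 1 0 1]

variable (a ε : ℝ)

lemma ricCoeff_familyC (i j : Fin 2) :
    ricCoeff (familyC a ε) i j = if i = 1 ∧ j = 1 then -2 * ε else 0 := by
  fin_cases i <;> fin_cases j <;>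
    simp only [ricCoeff, familyC, Fin.sum_univ_two, Fin.zero_eta, Fin.mk_one, Fin.isValue,
      Matrix.cons_val', Matrix.cons_val_zero, Matrix.cons_val_one, Matrix.cons_val_fin_one,
      one_ne_zero, zero_ne_one, and_self, and_true, and_false, ↓reduceIte] <;>
    ring

lemma RicS_ΓB_familyC (i j : Fin 2) (p : ℝ × ℝ) :
    RicS (ΓB (familyC a ε)) i j p = if i = 1 ∧ j = 1 then -2 * ε / p.1 ^ 2 else 0 := by
  simp only [RicS, Ric_ΓB, ricCoeff_familyC]
  fin_cases i <;> fin_cases j <;> simp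

lemma Hess_ΓB_familyC_rpow_mul (h : ℝ → ℝ) (i j : Fin 2) (p : ℝ × ℝ) (hp : p.1 ≠ 0) :
    Hess (ΓB (familyC a ε)) (fun q => q.1 ^ a * h q.2) i j p
      = if i = 1 ∧ j = 1 then p.1 ^ a * (deriv (deriv h) p.2 - a * ε * h p.2 / p.1 ^ 2)
        else 0 := by
  fin_cases i <;> fin_cases j <;>
  -- `q.1 ^ a` is not syntactically of the form `u q.1`, so the product rules are instantiated by hand
  · simp only [Fin.zero_eta, Fin.mk_one, Hess, ΓB, Fin.sum_univ_two,
      pd_zero_mul (· ^ a) h, pd_one_mul (· ^ a) h]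
    simp only [pd_zero_mul (deriv (· ^ a)) h, pd_one_mul (deriv (· ^ a)) h,
      pd_zero_mul (· ^ a) (deriv h), pd_one_mul (· ^ a) (deriv h)]
    simp only [familyC, deriv_rpow_const', deriv_const_mul_field', rpow_sub_one hp, Fin.isValue,
      Matrix.cons_val', Matrix.cons_val_zero, Matrix.cons_val_one, Matrix.cons_val_fin_one,
      zero_ne_one, and_self, and_true, and_false, ↓reduceIte]
    ring

lemma Hess_ΓB_familyC_eq_of_deriv_deriv (h : ℝ → ℝ) (p : ℝ × ℝ) (hp : p.1 ≠ 0)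
    (hh : deriv (deriv h) p.2 = 0) (i j : Fin 2) :
    Hess (ΓB (familyC a ε)) (fun q => q.1 ^ a * h q.2) i j p
      = a / 2 * (p.1 ^ a * h p.2) * RicS (ΓB (familyC a ε)) i j p := by
  rw [Hess_ΓB_familyC_rpow_mul a ε h i j p hp, RicS_ΓB_familyC, hh]
  split_ifs <;> ring

end TypeB

theorem typeB_two_dim_eigenspace_general
    (C : Fin 2 → Fin 2 → Fin 2 → ℝ)
    (hsym : ∀ i j k, C i j k = C j i k)
    (ε : ℝ)
    (h1 : C 0 0 0 = C 0 1 1 - 1) (h2 : C 0 0 1 = 0) (h3 : C 0 1 0 = 0)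
    (h4 : C 1 1 0 = ε) (h5 : C 1 1 1 = 0)
    (μ : ℝ) (hμ : μ = C 0 1 1 / 2) :
    (∀ i j : Fin 2, ∀ p : ℝ × ℝ, 0 < p.1 →
        Hess (ΓB C) (fun q => q.1 ^ (C 0 1 1)) i j p
          = μ * (p.1 ^ (C 0 1 1)) * RicS (ΓB C) i j p) ∧
    (∀ i j : Fin 2, ∀ p : ℝ × ℝ, 0 < p.1 →
        Hess (ΓB C) (fun q => q.1 ^ (C 0 1 1) * q.2) i j p
          = μ * (p.1 ^ (C 0 1 1) * p.2) * RicS (ΓB C) i j p) := by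
  have hC := TypeB.eq_familyC hsym h1 h2 h3 h4 h5
  subst hμ
  generalize C 0 1 1 = a at hC ⊢
  subst hC
  refine ⟨fun i j p hp => ?_, fun i j p hp => ?_⟩
  · simpa using TypeB.Hess_ΓB_familyC_eq_of_deriv_deriv a ε (fun _ => 1) p hp.ne' (by simp) i j
  · exact TypeB.Hess_ΓB_familyC_eq_of_deriv_deriv a ε id p hp.ne' (by simp) i j

/-- Type B with C₁₁¹ = C₁₂² − 1, C₁₁² = 0, C₁₂¹ = 0, C₂₂¹ = ε, C₂₂² = 0 and
μ = C₁₂²/2 ≠ 0: both (x¹)^α and (x¹)^α x², α = C₁₂², solve H(f) = μ f ρ_s. -/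
theorem typeB_two_dim_eigenspace
    (C : Fin 2 → Fin 2 → Fin 2 → ℝ)
    (hsym : ∀ i j k, C i j k = C j i k)
    (ε : ℝ) (hε : ε = 1 ∨ ε = -1)
    (h1 : C 0 0 0 = C 0 1 1 - 1) (h2 : C 0 0 1 = 0) (h3 : C 0 1 0 = 0)
    (h4 : C 1 1 0 = ε) (h5 : C 1 1 1 = 0)
    (μ : ℝ) (hμ : μ = C 0 1 1 / 2) (hμ0 : μ ≠ 0) :
    (∀ i j : Fin 2, ∀ p : ℝ × ℝ, 0 < p.1 →
        Hess (ΓB C) (fun q => q.1 ^ (C 0 1 1)) i j p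
          = μ * (p.1 ^ (C 0 1 1)) * RicS (ΓB C) i j p) ∧
    (∀ i j : Fin 2, ∀ p : ℝ × ℝ, 0 < p.1 →
        Hess (ΓB C) (fun q => q.1 ^ (C 0 1 1) * q.2) i j p
          = μ * (p.1 ^ (C 0 1 1) * p.2) * RicS (ΓB C) i j p) :=
  typeB_two_dim_eigenspace_general C hsym ε h1 h2 h3 h4 h5 μ hμ
end
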